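/- (Bound on the length of improvement paths.) Any finite sequence of strict unilateral improvements in the repercussion game — profiles a^0, …, a^T : M → Bool and players i_0, …, i_{T−1} ∈ M with a^{t+1} = flip_{i_t} a^t and q_{i_t}(a^{t+1}) > q_{i_t}(a^t) for all t < T — satisfies T ≤ 2^{|M|} − 1, because all the profiles a^0, …, a^T are pairwise distinct (the potential V strictly increases along the path). -/
import Mathlib


/-- Flip the action of player `i` in profile `a`. -/
def flipProfile {M : Type*} [DecidableEq M] (i : M) (a : M → Bool) : M → Bool :=
  Function.update a i (!a i)

/-- Repercussion utility of player `i`. -/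
noncomputable def repUtil {M : Type*} [DecidableEq M] (N : M → Finset M)
    (U : M → (M → Bool) → ℝ) (i : M) (a : M → Bool) : ℝ :=
  if a i then U i a + ∑ j ∈ N i, (U j a - U j (flipProfile i a)) else U i a

lemma flipProfile_flipProfile {M : Type*} [DecidableEq M] (i : M) (a : M → Bool) :
    flipProfile i (flipProfile i a) = a := by
  funext j
  by_cases h : j = i
  · subst h; simp [flipProfile]
  · simp [flipProfile, Function.update_of_ne h]

lemma potential_diff {M : Type*} [Fintype M] [DecidableEq M]
    (N : M → Finset M) (U : M → (M → Bool) → ℝ)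
    (hself : ∀ i, i ∉ N i)
    (hsym : ∀ i j, j ∈ N i ↔ i ∈ N j)
    (hloc : ∀ i (a a' : M → Bool),
      (∀ j, j = i ∨ j ∈ N i → a j = a' j) → U i a = U i a')
    (i : M) (b : M → Bool) :
    (∑ k, U k (flipProfile i b)) - (∑ k, U k b)
      = repUtil N U i (flipProfile i b) - repUtil N U i b := by
  set b' := flipProfile i b with hb'
  have hflip : flipProfile i b' = b := flipProfile_flipProfile i b
  have hlocal : ∀ k, k ≠ i → k ∉ N i → U k b' = U k b := by
    intro k hk hkN
    apply hloc k b' b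
    intro j hj
    have hji : j ≠ i := by
      rcases hj with rfl | hj
      · exact hk
      · exact fun h => hkN ((hsym k i).mp (h ▸ hj))
    simp [hb', flipProfile, Function.update_of_ne hji]
  have hsum : (∑ k, U k b') - (∑ k, U k b)
      = (U i b' - U i b) + ∑ j ∈ N i, (U j b' - U j b) := by
    rw [← Finset.sum_sub_distrib]
    rw [← Finset.sum_subset (Finset.subset_univ (insert i (N i)))
      (by
        intro k _ hk
        simp only [Finset.mem_insert, not_or] at hk
        rw [hlocal k hk.1 hk.2, sub_self])]
    rw [Finset.sum_insert (hself i)]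
  rw [hsum]
  by_cases h : b i
  · have h' : b' i = false := by simp [hb', flipProfile, h]
    simp only [repUtil, h, h', if_true, if_false, Bool.false_eq_true, hflip]
    rw [← hb']
    simp only [Finset.sum_sub_distrib]
    ring
  · have hb : b i = false := by simpa using h
    have h' : b' i = true := by simp [hb', flipProfile, hb]
    simp only [repUtil, hb, h', if_true, if_false, Bool.false_eq_true, hflip]
    ring

/-- Bound on the length of improvement paths: along any finite sequence of
strict unilateral improvements the visited profiles are pairwise distinct
(since the potential strictly increases), hence the length is at most
`2 ^ |M| - 1`. -/
theorem improvement_path_length_bound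
    {M : Type*} [Fintype M] [DecidableEq M] [Nonempty M]
    (N : M → Finset M) (U : M → (M → Bool) → ℝ)
    (hself : ∀ i, i ∉ N i)
    (hsym : ∀ i j, j ∈ N i ↔ i ∈ N j)
    (hloc : ∀ i (a a' : M → Bool),
      (∀ j, j = i ∨ j ∈ N i → a j = a' j) → U i a = U i a')
    (T : ℕ) (a : ℕ → M → Bool) (ip : ℕ → M)
    (hstep : ∀ t < T, a (t + 1) = flipProfile (ip t) (a t))
    (himp : ∀ t < T, repUtil N U (ip t) (a t) < repUtil N U (ip t) (a (t + 1))) :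
    T ≤ 2 ^ Fintype.card M - 1 ∧
      ∀ s ≤ T, ∀ t ≤ T, s ≠ t → a s ≠ a t := by
  set V : (M → Bool) → ℝ := fun b => ∑ k, U k b with hV
  have hstepV : ∀ t < T, V (a t) < V (a (t + 1)) := by
    intro t ht
    have hd := potential_diff N U hself hsym hloc (ip t) (a t)
    rw [← hstep t ht] at hd
    have := himp t ht
    simp only [hV]
    linarith
  have hchain : ∀ s t, s < t → t ≤ T → V (a s) < V (a t) := by
    intro s t hst htT
    induction t, hst using Nat.le_induction with
    | base => exact hstepV s (by omega)
    | succ n hn ih =>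
      exact lt_trans (ih (by omega)) (hstepV n (by omega))
  have hdist : ∀ s ≤ T, ∀ t ≤ T, s ≠ t → a s ≠ a t := by
    intro s hs t ht hne heq
    rcases lt_or_gt_of_ne hne with h | h
    · exact absurd (congrArg V heq) (ne_of_lt (hchain s t h ht))
    · exact absurd (congrArg V heq.symm) (ne_of_lt (hchain t s h hs))
  refine ⟨?_, hdist⟩
  have hinj : Function.Injective (fun t : Fin (T + 1) => a t) := by
    intro s t hst
    by_contra hne
    exact hdist s (Nat.lt_succ_iff.mp s.isLt) t (Nat.lt_succ_iff.mp t.isLt)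
      (fun h => hne (Fin.ext h)) hst
  have hcard := Fintype.card_le_of_injective _ hinj
  simp only [Fintype.card_fin, Fintype.card_fun, Fintype.card_bool] at hcard
  omega
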